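/- arXiv:1601.03475 — 3 statements merged into one kernel-verified Lean document; each statement's English description precedes it below -/
import Mathlib

section
/- Let (M, ≤, u) be a scaled partially ordered abelian semigroup, let G be the Grothendieck group of M with natural map γ : M → G, ordered by the cone G₊ = {γ(y) − γ(x) : x, y ∈ M, x ≤ y}, with order unit γ(u). Then for every state s on (M, ≤, u) the formula s′(γ(x) − γ(y)) = s(x) − s(y) gives a well-defined state s′ on (G, G₊, γ(u)); conversely, for every state s′ on (G, G₊, γ(u)) the map x ↦ s′(γ(x)) is a state on (M, ≤, u); and the assignment s ↦ s′ is an affine bijection between S(M, ≤, u) and the set of states on (G, G₊, γ(u)) which is a homeomorphism with respect to the topologies of pointwise convergence on both sides. -/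
/-- A state on a scaled partially ordered abelian semigroup `(M, ≤, u)`. -/
def IsState {M : Type*} [AddCommMonoid M] [PartialOrder M] (u : M) (s : M → ℝ) : Prop :=
  s 0 = 0 ∧ (∀ x y : M, s (x + y) = s x + s y) ∧
    (∀ x y : M, x ≤ y → s x ≤ s y) ∧ s u = 1

/-- The state space `S(M, ≤, u)`, a subset of `M → ℝ` with the topology of
pointwise convergence. -/
def StateSpace (M : Type*) [AddCommMonoid M] [PartialOrder M] (u : M) : Set (M → ℝ) :=
  {s | IsState u s}

/-- The positive cone `G₊ = {γ y - γ x : x, y ∈ M, x ≤ y}` of the Grothendieck group. -/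
def GrothendieckCone {M G : Type*} [AddCommMonoid M] [PartialOrder M] [AddCommGroup G]
    (γ : M →+ G) : Set G :=
  {g | ∃ x y : M, x ≤ y ∧ g = γ y - γ x}

/-- A state on `(G, G₊, e)`: an additive map `s' : G → ℝ` which is nonnegative on
`G₊` and satisfies `s' e = 1`. -/
def IsGroupState {G : Type*} [AddCommGroup G] (Gpos : Set G) (e : G) (s' : G → ℝ) : Prop :=
  (∀ g h : G, s' (g + h) = s' g + s' h) ∧ (∀ g ∈ Gpos, 0 ≤ s' g) ∧ s' e = 1

/-- The state space of `(G, G₊, e)`, a subset of `G → ℝ` with the topology of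
pointwise convergence. -/
def GroupStateSpace (G : Type*) [AddCommGroup G] (Gpos : Set G) (e : G) : Set (G → ℝ) :=
  {s' | IsGroupState Gpos e s'}

/-!
For additive `s : M → ℝ`, the value `s x - s y` depends only on `γ x - γ y`: if
`γ (x + b) = γ (a + y)` then `x + b + z = a + y + z` for some `z`, and applying `s` and cancelling
in `ℝ` gives `s x - s y = s a - s b`. Fixing a representative of every `g : G` makes `s ↦ s'` a
linear map whose coordinates are differences of two evaluations, hence continuous for the product
topologies; its inverse is restriction along `γ`.
-/

section

variable {M G : Type*} [AddCommMonoid M] [AddCommGroup G] {γ : M →+ G}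

theorem sub_eq_sub_of_map_sub_eq (hγker : ∀ x y : M, γ x = γ y → ∃ z, x + z = y + z)
    {s : M → ℝ} (hs : ∀ x y, s (x + y) = s x + s y) {x y a b : M}
    (h : γ x - γ y = γ a - γ b) : s x - s y = s a - s b := by
  obtain ⟨z, hz⟩ := hγker (x + b) (a + y) <| by
    rw [map_add, map_add]
    exact sub_eq_sub_iff_add_eq_add.mp h
  have hsz := congrArg s hz
  simp only [hs] at hsz
  linarith

variable (hγsurj : ∀ g : G, ∃ x y : M, g = γ x - γ y)

noncomputable def grothendieckExtend : (M → ℝ) →L[ℝ] (G → ℝ) :=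
  ContinuousLinearMap.pi fun g =>
    ContinuousLinearMap.proj (R := ℝ) (φ := fun _ : M => ℝ) (hγsurj g).choose -
      ContinuousLinearMap.proj (R := ℝ) (φ := fun _ : M => ℝ) (hγsurj g).choose_spec.choose

variable {hγsurj}

theorem grothendieckExtend_apply_sub (hγker : ∀ x y : M, γ x = γ y → ∃ z, x + z = y + z)
    {s : M → ℝ} (hs : ∀ x y, s (x + y) = s x + s y) (x y : M) :
    grothendieckExtend hγsurj s (γ x - γ y) = s x - s y :=
  sub_eq_sub_of_map_sub_eq hγker hs (hγsurj _).choose_spec.choose_spec.symm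

theorem grothendieckExtend_apply_map (hγker : ∀ x y : M, γ x = γ y → ∃ z, x + z = y + z)
    {s : M → ℝ} (hs : ∀ x y, s (x + y) = s x + s y) (hs₀ : s 0 = 0) (x : M) :
    grothendieckExtend hγsurj s (γ x) = s x := by
  simpa [hs₀] using grothendieckExtend_apply_sub hγker hs x 0

theorem grothendieckExtend_add (hγker : ∀ x y : M, γ x = γ y → ∃ z, x + z = y + z)
    {s : M → ℝ} (hs : ∀ x y, s (x + y) = s x + s y) (g h : G) :
    grothendieckExtend hγsurj s (g + h) =
      grothendieckExtend hγsurj s g + grothendieckExtend hγsurj s h := by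
  obtain ⟨a, b, rfl⟩ := hγsurj g
  obtain ⟨c, d, rfl⟩ := hγsurj h
  have hsum : γ a - γ b + (γ c - γ d) = γ (a + c) - γ (b + d) := by
    simp only [map_add]
    abel
  rw [hsum]
  simp only [grothendieckExtend_apply_sub hγker hs, hs]
  ring

theorem grothendieckExtend_comp {s' : G → ℝ} (hs' : ∀ g h, s' (g + h) = s' g + s' h) :
    grothendieckExtend hγsurj (fun x => s' (γ x)) = s' := by
  funext g
  exact (map_sub (AddMonoidHom.mk' s' hs') _ _).symm.trans
    (congrArg s' (hγsurj g).choose_spec.choose_spec.symm)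

variable [PartialOrder M] {u : M}

theorem isGroupState_grothendieckExtend (hγker : ∀ x y : M, γ x = γ y → ∃ z, x + z = y + z)
    {s : M → ℝ} (hs : IsState u s) :
    IsGroupState (GrothendieckCone γ) (γ u) (grothendieckExtend hγsurj s) := by
  obtain ⟨hs₀, hadd, hmono, hunit⟩ := hs
  refine ⟨grothendieckExtend_add hγker hadd, ?_, ?_⟩
  · rintro _ ⟨x, y, hxy, rfl⟩
    rw [grothendieckExtend_apply_sub hγker hadd]
    exact sub_nonneg.mpr (hmono x y hxy)
  · rw [grothendieckExtend_apply_map hγker hadd hs₀, hunit]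

theorem IsGroupState.isState_comp {s' : G → ℝ}
    (hs' : IsGroupState (GrothendieckCone γ) (γ u) s') : IsState u fun x => s' (γ x) := by
  obtain ⟨hadd, hpos, hunit⟩ := hs'
  let f := AddMonoidHom.mk' s' hadd
  refine ⟨(congrArg s' γ.map_zero).trans f.map_zero, fun x y => by simp only [map_add, hadd],
    fun x y hxy => ?_, hunit⟩
  have hsub : s' (γ y - γ x) = s' (γ y) - s' (γ x) := map_sub f _ _
  linarith [hpos _ ⟨x, y, hxy, rfl⟩]

variable (u hγsurj)

noncomputable def stateSpaceEquivGroupStateSpace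
    (hγker : ∀ x y : M, γ x = γ y → ∃ z, x + z = y + z) :
    StateSpace M u ≃ GroupStateSpace G (GrothendieckCone γ) (γ u) where
  toFun s := ⟨grothendieckExtend hγsurj s, isGroupState_grothendieckExtend hγker s.2⟩
  invFun s' := ⟨fun x => s'.1 (γ x), IsGroupState.isState_comp s'.2⟩
  left_inv s := Subtype.ext <| funext <| grothendieckExtend_apply_map hγker s.2.2.1 s.2.1
  right_inv s' := Subtype.ext <| grothendieckExtend_comp s'.2.1

end

theorem stateSpace_equiv_grothendieckStateSpace_general
    {M G : Type*} [AddCommMonoid M] [PartialOrder M] [AddCommGroup G]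
    (u : M)
    (γ : M →+ G)
    (hγsurj : ∀ g : G, ∃ x y : M, g = γ x - γ y)
    (hγker : ∀ x y : M, γ x = γ y ↔ ∃ z : M, x + z = y + z) :
    (∀ s ∈ StateSpace M u, ∃ s' ∈ GroupStateSpace G (GrothendieckCone γ) (γ u),
        ∀ x y : M, s' (γ x - γ y) = s x - s y) ∧
    (∀ s' ∈ GroupStateSpace G (GrothendieckCone γ) (γ u),
        (fun x : M => s' (γ x)) ∈ StateSpace M u) ∧
    ∃ T : StateSpace M u ≃ GroupStateSpace G (GrothendieckCone γ) (γ u),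
      (∀ s : StateSpace M u, ∀ x y : M,
          (T s : G → ℝ) (γ x - γ y) = (s : M → ℝ) x - (s : M → ℝ) y) ∧
      (∀ s₁ s₂ : StateSpace M u, ∀ t : ℝ, 0 ≤ t → t ≤ 1 →
        ∀ h : t • (s₁ : M → ℝ) + (1 - t) • (s₂ : M → ℝ) ∈ StateSpace M u,
          ((T ⟨t • (s₁ : M → ℝ) + (1 - t) • (s₂ : M → ℝ), h⟩ : G → ℝ))
            = t • (T s₁ : G → ℝ) + (1 - t) • (T s₂ : G → ℝ)) ∧
      Continuous T ∧ Continuous T.symm := by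
  have hker : ∀ x y : M, γ x = γ y → ∃ z, x + z = y + z := fun x y => (hγker x y).mp
  refine ⟨fun s hs => ⟨grothendieckExtend hγsurj s, isGroupState_grothendieckExtend hker hs,
      grothendieckExtend_apply_sub hker hs.2.1⟩,
    fun s' hs' => IsGroupState.isState_comp hs',
    stateSpaceEquivGroupStateSpace hγsurj u hker,
    fun s => grothendieckExtend_apply_sub hker s.2.2.1, ?_, ?_, ?_⟩
  · intro s₁ s₂ t _ _ _
    exact (map_add _ _ _).trans (congrArg₂ (· + ·) (map_smul _ _ _) (map_smul _ _ _))
  · exact ((grothendieckExtend hγsurj).continuous.comp continuous_subtype_val).subtype_mk _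
  · refine Continuous.subtype_mk ?_ _
    exact continuous_pi fun x => (continuous_apply (γ x)).comp continuous_subtype_val

/-- Let `(M, ≤, u)` be a scaled partially ordered abelian semigroup and let
`γ : M → G` be its Grothendieck group (characterized by: every element of `G` is a
difference `γ x - γ y`, and `γ x = γ y` iff `x + z = y + z` for some `z`), ordered by
the cone `G₊ = {γ y - γ x : x ≤ y}` with order unit `γ u`. Then:
(1) every state `s` on `(M, ≤, u)` gives a well-defined state `s'` on `(G, G₊, γ u)`
via `s' (γ x - γ y) = s x - s y`;
(2) conversely, for every state `s'` on `(G, G₊, γ u)` the map `x ↦ s' (γ x)` is a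
state on `(M, ≤, u)`;
(3) the assignment `s ↦ s'` is an affine bijection between the two state spaces and a
homeomorphism for the topologies of pointwise convergence. -/
theorem stateSpace_equiv_grothendieckStateSpace
    {M G : Type*} [AddCommMonoid M] [PartialOrder M] [AddCommGroup G]
    (hpos : ∀ a : M, 0 ≤ a)
    (hadd : ∀ a b c : M, a ≤ b → a + c ≤ b + c)
    (u : M) (hu : ∀ x : M, ∃ n : ℕ, x ≤ n • u)
    (γ : M →+ G)
    (hγsurj : ∀ g : G, ∃ x y : M, g = γ x - γ y)
    (hγker : ∀ x y : M, γ x = γ y ↔ ∃ z : M, x + z = y + z) :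
    (∀ s ∈ StateSpace M u, ∃ s' ∈ GroupStateSpace G (GrothendieckCone γ) (γ u),
        ∀ x y : M, s' (γ x - γ y) = s x - s y) ∧
    (∀ s' ∈ GroupStateSpace G (GrothendieckCone γ) (γ u),
        (fun x : M => s' (γ x)) ∈ StateSpace M u) ∧
    ∃ T : StateSpace M u ≃ GroupStateSpace G (GrothendieckCone γ) (γ u),
      (∀ s : StateSpace M u, ∀ x y : M,
          (T s : G → ℝ) (γ x - γ y) = (s : M → ℝ) x - (s : M → ℝ) y) ∧
      (∀ s₁ s₂ : StateSpace M u, ∀ t : ℝ, 0 ≤ t → t ≤ 1 →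
        ∀ h : t • (s₁ : M → ℝ) + (1 - t) • (s₂ : M → ℝ) ∈ StateSpace M u,
          ((T ⟨t • (s₁ : M → ℝ) + (1 - t) • (s₂ : M → ℝ), h⟩ : G → ℝ))
            = t • (T s₁ : G → ℝ) + (1 - t) • (T s₂ : G → ℝ)) ∧
      Continuous T ∧ Continuous T.symm :=
  stateSpace_equiv_grothendieckStateSpace_general u γ hγsurj hγker
end

section
/- Let (M, ≤, u) be a scaled partially ordered abelian semigroup and let x, y ∈ M. Then s(x) < s(y) for every state s ∈ S(M, ≤, u) if and only if there exist a positive integer n and an element z ∈ M such that n • x + z + u ≤ n • y + z. -/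
/-!
If no `n > 0` and `z` satisfy `n • x + z + u ≤ n • y + z`, then `u` is not below `0` for the
cancellative preorder generated by `≤` together with `y ≤ x`, so it suffices to find a state for
that preorder. A state of an ordered cancellative monoid `N` with positive order unit `u` comes
from a ℚ-linear functional on `N →₀ ℚ` that is nonnegative on the cone of formal differences
`P - Q` with `∑ Q ≤ ∑ P` and sends `u` to `1`. It exists by the M. Riesz extension theorem:
`u` is an order unit for the cone, and `-u` lies outside it, since clearing denominators would give
`∑ P + k • u ≤ ∑ P` with `k > 0`. Working over ℚ rather than ℝ is what lets the denominators be
cleared. Conversely, a state turns `n • x + z + u ≤ n • y + z` into `n s(x) + 1 ≤ n s(y)`.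
-/

namespace PointedCone

variable {E : Type*} [AddCommGroup E] [Module ℚ E] {C : PointedCone ℚ E}

lemma smul_le_of_add_smul_mem {f : E →ₗ.[ℚ] ℝ} (nonneg : ∀ x : f.domain, (x : E) ∈ C → 0 ≤ f x)
    {y : E} {c : ℝ} (le_c : ∀ x : f.domain, -((x : E) + y) ∈ C → f x ≤ c)
    (c_le : ∀ x : f.domain, (x : E) + y ∈ C → c ≤ f x)
    (x : f.domain) (r : ℚ) (hxy : (x : E) + r • y ∈ C) : (r : ℝ) * c ≤ f x := by
  rcases lt_trichotomy r 0 with hr | rfl | hr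
  · have h := le_c (r⁻¹ • x) <| by
      convert C.smul_mem (neg_nonneg.2 (inv_nonpos.2 hr.le)) hxy using 1
      simp [smul_add, smul_smul, inv_mul_cancel₀ hr.ne, add_comm]
    rwa [f.map_smul, Rat.smul_def, Rat.cast_inv, ← div_eq_inv_mul,
      div_le_iff_of_neg (by exact_mod_cast hr), mul_comm] at h
  · simpa using nonneg x (by simpa using hxy)
  · have h := c_le (r⁻¹ • x) <| by
      convert C.smul_mem (inv_nonneg.2 hr.le) hxy using 1
      simp [smul_add, smul_smul, inv_mul_cancel₀ hr.ne']
    rwa [f.map_smul, Rat.smul_def, Rat.cast_inv, le_inv_mul_iff₀ (by exact_mod_cast hr)] at h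

lemma exists_nonneg_supSpanSingleton {f : E →ₗ.[ℚ] ℝ}
    (nonneg : ∀ x : f.domain, (x : E) ∈ C → 0 ≤ f x)
    (dense : ∀ v, ∃ x : f.domain, (x : E) + v ∈ C) {y : E} (hy : y ∉ f.domain) :
    ∃ c : ℝ, ∀ z : (f.supSpanSingleton y (-c) hy).domain, (z : E) ∈ C →
      0 ≤ f.supSpanSingleton y (-c) hy z := by
  obtain ⟨c, le_c, c_le⟩ : (upperBounds (f '' {x | -((x : E) + y) ∈ C}) ∩
      lowerBounds (f '' {x | (x : E) + y ∈ C})).Nonempty := by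
    refine exists_between_of_forall_le ?_ ?_ ?_
    · obtain ⟨x, hx⟩ := dense (-y)
      exact ⟨_, -x, by rwa [Set.mem_ofPred_eq, NegMemClass.coe_neg, neg_add, neg_neg], rfl⟩
    · obtain ⟨x, hx⟩ := dense y
      exact ⟨_, x, hx, rfl⟩
    rintro _ ⟨xn, hxn, rfl⟩ _ ⟨xp, hxp, rfl⟩
    have := nonneg (xp - xn) (by simpa [sub_eq_add_neg] using C.add_mem hxp hxn)
    rwa [f.map_sub, sub_nonneg] at this
  refine ⟨c, ?_⟩
  rintro ⟨z, hz⟩ hzC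
  obtain ⟨x, hx, _, hr, rfl⟩ := Submodule.mem_sup.1 hz
  obtain ⟨r, rfl⟩ := Submodule.mem_span_singleton.1 hr
  rw [LinearPMap.supSpanSingleton_apply_mk _ _ _ _ _ hx, Rat.smul_def, mul_neg, ← sub_eq_add_neg,
    sub_nonneg]
  exact smul_le_of_add_smul_mem nonneg (fun x hx => le_c ⟨x, hx, rfl⟩)
    (fun x hx => c_le ⟨x, hx, rfl⟩) ⟨x, hx⟩ r hzC

/-- The Zorn argument behind `riesz_extension` works over ℚ unchanged: only the target `ℝ` needs
to be conditionally complete. -/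
theorem riesz_extension_rat (f : E →ₗ.[ℚ] ℝ) (nonneg : ∀ x : f.domain, (x : E) ∈ C → 0 ≤ f x)
    (dense : ∀ v, ∃ x : f.domain, (x : E) + v ∈ C) :
    ∃ g : E →ₗ[ℚ] ℝ, (∀ x : f.domain, g x = f x) ∧ ∀ x ∈ C, 0 ≤ g x := by
  set S := {g : E →ₗ.[ℚ] ℝ | ∀ x : g.domain, (x : E) ∈ C → 0 ≤ g x}
  have chain_bdd : ∀ c ⊆ S, IsChain (· ≤ ·) c → ∀ g ∈ c, ∃ ub ∈ S, ∀ h ∈ c, h ≤ ub := by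
    intro c hcS hc g hg
    refine ⟨LinearPMap.sSup c hc.directedOn, ?_, fun h hh => LinearPMap.le_sSup _ hh⟩
    rintro ⟨x, hx⟩ hxC
    obtain ⟨h, hh, hxh⟩ := (LinearPMap.mem_domain_sSup_iff ⟨g, hg⟩ hc.directedOn).1 hx
    exact (hcS hh ⟨x, hxh⟩ hxC).trans_eq (LinearPMap.sSup_apply hc.directedOn hh ⟨x, hxh⟩).symm
  obtain ⟨g, hfg, hgS, hgmax⟩ := zorn_le_nonempty₀ S chain_bdd f nonneg
  have hg_top : g.domain = ⊤ := by
    by_contra hne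
    obtain ⟨y, -, hy⟩ := SetLike.exists_of_lt (lt_top_iff_ne_top.2 hne)
    obtain ⟨c, hc⟩ := exists_nonneg_supSpanSingleton hgS
      (fun v => let ⟨x, hx⟩ := dense v; ⟨Submodule.inclusion hfg.1 x, hx⟩) hy
    have hle := (hgmax hc (g.left_le_sup _ _)).1
    exact hy (hle (Submodule.mem_sup_right (Submodule.mem_span_singleton_self y)))
  refine ⟨g.toFun ∘ₗ (LinearEquiv.ofTop _ hg_top).symm.toLinearMap, fun x => (hfg.2 rfl).symm,
    fun x hx => hgS _ hx⟩

lemma nonneg_of_smul_mem {e : E} (he : -e ∉ C) {t : ℚ} (ht : t • e ∈ C) : 0 ≤ t := by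
  by_contra! h
  refine he ?_
  convert C.smul_mem (inv_nonneg.2 (neg_nonneg.2 h.le)) ht using 1
  rw [smul_smul, inv_neg, neg_mul, inv_mul_cancel₀ h.ne, neg_one_smul]

theorem exists_nonneg_linearMap_eq_one {e : E} (he : -e ∉ C)
    (dense : ∀ v, ∃ t : ℚ, t • e + v ∈ C) :
    ∃ g : E →ₗ[ℚ] ℝ, (∀ v ∈ C, 0 ≤ g v) ∧ g e = 1 := by
  have he0 : e ≠ 0 := by rintro rfl; exact he (by simp)
  let f : E →ₗ.[ℚ] ℝ := LinearPMap.mkSpanSingleton e 1 he0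
  have f_nonneg : ∀ x : f.domain, (x : E) ∈ C → 0 ≤ f x := by
    rintro ⟨_, hx⟩ hxC
    obtain ⟨t, rfl⟩ := Submodule.mem_span_singleton.1 hx
    rw [LinearPMap.mkSpanSingleton'_apply, Rat.smul_def, mul_one]
    exact_mod_cast nonneg_of_smul_mem he hxC
  have f_dense : ∀ v, ∃ x : f.domain, (x : E) + v ∈ C := fun v =>
    let ⟨t, ht⟩ := dense v
    ⟨⟨t • e, Submodule.smul_mem _ t (Submodule.mem_span_singleton_self e)⟩, ht⟩
  obtain ⟨g, hgf, hg⟩ := riesz_extension_rat f f_nonneg f_dense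
  exact ⟨g, hg, (hgf ⟨e, Submodule.mem_span_singleton_self e⟩).trans
    (LinearPMap.mkSpanSingleton_apply ℚ ℚ he0 (1 : ℝ))⟩

end PointedCone

section StateCone

open Finsupp

variable {N : Type*}

noncomputable def natToRat : (N →₀ ℕ) →+ (N →₀ ℚ) :=
  mapRange.addMonoidHom (Nat.castAddMonoidHom ℚ)

lemma natToRat_injective : Function.Injective (natToRat (N := N)) :=
  mapRange_injective _ Nat.cast_zero Nat.cast_injective

@[simp] lemma natToRat_single (a : N) (k : ℕ) : natToRat (single a k) = single a (k : ℚ) :=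
  mapRange_single (hf := map_zero _)

variable [AddCommMonoid N] [Preorder N] [IsOrderedCancelAddMonoid N]

variable (N) in
/-- The multiple `k` makes the set closed under positive rational scalars. -/
def stateCone : PointedCone ℚ (N →₀ ℚ) where
  carrier := {v | ∃ k : ℕ, 0 < k ∧ ∃ P Q : N →₀ ℕ, k • v = natToRat P - natToRat Q ∧
    linearCombination ℕ id Q ≤ linearCombination ℕ id P}
  zero_mem' := ⟨1, one_pos, 0, 0, by simp, le_rfl⟩
  add_mem' := by
    rintro v w ⟨k, hk, P, Q, hv, hPQ⟩ ⟨l, hl, P', Q', hw, hPQ'⟩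
    refine ⟨k * l, mul_pos hk hl, l • P + k • P', l • Q + k • Q', ?_, ?_⟩
    · rw [map_add, map_add, map_nsmul, map_nsmul, map_nsmul, map_nsmul, mul_comm k l, smul_add,
        mul_smul, hv, mul_comm, mul_smul, hw, smul_sub, smul_sub]
      abel
    · simp only [map_add, map_nsmul]
      exact add_le_add (nsmul_le_nsmul_right hPQ l) (nsmul_le_nsmul_right hPQ' k)
  smul_mem' := by
    rintro ⟨c, hc⟩ v ⟨k, hk, P, Q, hv, hPQ⟩
    set q : ℚ≥0 := ⟨c, hc⟩
    refine ⟨k * q.den, mul_pos hk q.den_pos, q.num • P, q.num • Q, ?_, ?_⟩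
    · have hq : (q.den : ℚ) * c = q.num := by
        have := congrArg ((↑) : ℚ≥0 → ℚ) q.den_mul_eq_num
        push_cast at this
        exact this
      rw [map_nsmul, map_nsmul, ← smul_sub, ← hv, Nonneg.mk_smul, ← Nat.cast_smul_eq_nsmul ℚ,
        ← Nat.cast_smul_eq_nsmul ℚ, ← Nat.cast_smul_eq_nsmul ℚ, smul_smul, smul_smul, Nat.cast_mul,
        mul_assoc, hq, mul_comm]
    · simp only [map_nsmul]
      exact nsmul_le_nsmul_right hPQ _

lemma natToRat_sub_mem_stateCone {P Q : N →₀ ℕ}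
    (h : linearCombination ℕ id Q ≤ linearCombination ℕ id P) :
    natToRat P - natToRat Q ∈ stateCone N :=
  ⟨1, one_pos, P, Q, one_smul _ _, h⟩

lemma single_sub_single_mem_stateCone {a b : N} (h : a ≤ b) :
    single b 1 - single a 1 ∈ stateCone N := by
  simpa using natToRat_sub_mem_stateCone (P := single b 1) (Q := single a 1) (by simpa using h)

lemma single_add_sub_mem_stateCone (a b : N) :
    single (a + b) 1 - (single a 1 + single b 1) ∈ stateCone N := by
  have := natToRat_sub_mem_stateCone (P := single (a + b) 1) (Q := single a 1 + single b 1)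
    (by simp only [map_add, linearCombination_single, one_smul, id, le_rfl])
  rwa [map_add, natToRat_single, natToRat_single, natToRat_single, Nat.cast_one] at this

lemma sub_single_add_mem_stateCone (a b : N) :
    single a 1 + single b 1 - single (a + b) 1 ∈ stateCone N := by
  have := natToRat_sub_mem_stateCone (P := single a 1 + single b 1) (Q := single (a + b) 1)
    (by simp only [map_add, linearCombination_single, one_smul, id, le_rfl])
  rwa [map_add, natToRat_single, natToRat_single, natToRat_single, Nat.cast_one] at this

lemma neg_single_notMem_stateCone {u : N} (hu : 0 < u) : -single u 1 ∉ stateCone N := by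
  rintro ⟨k, hk, P, Q, hPQ, hQP⟩
  rw [smul_neg, neg_eq_iff_eq_neg, neg_sub] at hPQ
  have hQ : Q = P + k • single u 1 := natToRat_injective <| by
    rw [map_add, map_nsmul, natToRat_single, Nat.cast_one, hPQ, add_sub_cancel]
  rw [hQ, map_add, map_nsmul, linearCombination_single, one_smul, id, add_le_iff_nonpos_right]
    at hQP
  exact (nsmul_pos hu hk.ne').not_ge hQP

lemma exists_smul_single_add_single_mem_stateCone (hpos : ∀ a : N, 0 ≤ a) {u : N}
    (hunit : ∀ a, ∃ n : ℕ, a ≤ n • u) (a : N) (r : ℚ) :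
    ∃ t : ℚ, t • single u 1 + single a r ∈ stateCone N := by
  rcases le_or_gt 0 r with hr | hr
  · refine ⟨0, ?_⟩
    have := natToRat_sub_mem_stateCone (P := single a 1) (Q := 0) (by simpa using hpos a)
    simpa [smul_single] using (stateCone N).smul_mem hr this
  · obtain ⟨n, hn⟩ := hunit a
    have := natToRat_sub_mem_stateCone (P := single u n) (Q := single a 1) (by simpa using hn)
    refine ⟨-r * n, ?_⟩
    convert (stateCone N).smul_mem (neg_nonneg.2 hr.le) this using 1
    simp only [natToRat_single, Nat.cast_one, smul_sub, smul_single, smul_eq_mul, mul_one,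
      single_neg, sub_neg_eq_add]

lemma exists_smul_single_add_mem_stateCone (hpos : ∀ a : N, 0 ≤ a) {u : N}
    (hunit : ∀ a, ∃ n : ℕ, a ≤ n • u) (v : N →₀ ℚ) :
    ∃ t : ℚ, t • single u 1 + v ∈ stateCone N := by
  induction v using Finsupp.induction with
  | zero => exact ⟨0, by simp⟩
  | single_add a r w _ _ ih =>
    obtain ⟨t, ht⟩ := ih
    obtain ⟨t', ht'⟩ := exists_smul_single_add_single_mem_stateCone hpos hunit a r
    refine ⟨t' + t, ?_⟩
    convert (stateCone N).add_mem ht' ht using 1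
    module

theorem exists_monotone_addMonoidHom_real (hpos : ∀ a : N, 0 ≤ a) {u : N}
    (hunit : ∀ a, ∃ n : ℕ, a ≤ n • u) (hu : 0 < u) :
    ∃ s : N →+ ℝ, Monotone s ∧ s u = 1 := by
  obtain ⟨g, hg, hgu⟩ := PointedCone.exists_nonneg_linearMap_eq_one
    (neg_single_notMem_stateCone hu) (exists_smul_single_add_mem_stateCone hpos hunit)
  refine ⟨AddMonoidHom.mk' (fun a => g (single a 1)) fun a b => ?_, fun a b hab => ?_, hgu⟩
  · have h₁ := hg _ (single_add_sub_mem_stateCone a b)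
    have h₂ := hg _ (sub_single_add_mem_stateCone a b)
    simp only [map_sub, map_add] at h₁ h₂
    exact le_antisymm (by linarith) (by linarith)
  · have := hg _ (single_sub_single_mem_stateCone hab)
    rwa [map_sub, sub_nonneg] at this

end StateCone

section Twisted

variable {M : Type*} [AddCommMonoid M] [PartialOrder M]

/-- The smallest cancellative additive preorder containing `≤` in which `y ≤ x`: the states of
`Twisted x y` are the states `s` of `M` with `s y ≤ s x`. -/
def TwistedLE (x y a b : M) : Prop := ∃ m : ℕ, ∃ z : M, m • x + z + a ≤ m • y + z + b

variable {x y : M}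

lemma twistedLE_of_le {a b : M} (h : a ≤ b) : TwistedLE x y a b :=
  ⟨0, 0, by simpa using h⟩

lemma twistedLE_swap : TwistedLE x y y x :=
  ⟨1, 0, by rw [one_smul, one_smul, add_zero, add_zero, add_comm]⟩

lemma TwistedLE.trans [IsOrderedAddMonoid M] {a b c : M} :
    TwistedLE x y a b → TwistedLE x y b c → TwistedLE x y a c := by
  rintro ⟨m, z, h⟩ ⟨m', z', h'⟩
  refine ⟨m + m', z + z' + b, ?_⟩
  calc (m + m') • x + (z + z' + b) + a = (m • x + z + a) + (m' • x + z' + b) := by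
        rw [add_nsmul]; abel
    _ ≤ (m • y + z + b) + (m' • y + z' + c) := add_le_add h h'
    _ = (m + m') • y + (z + z' + b) + c := by rw [add_nsmul]; abel

lemma TwistedLE.add_right [IsOrderedAddMonoid M] {a b : M} (h : TwistedLE x y a b) (c : M) :
    TwistedLE x y (a + c) (b + c) := by
  obtain ⟨m, z, h⟩ := h
  exact ⟨m, z, by simpa only [add_assoc] using add_le_add_left h c⟩

lemma TwistedLE.of_add_left {a b c : M} (h : TwistedLE x y (c + a) (c + b)) :
    TwistedLE x y a b := by
  obtain ⟨m, z, h⟩ := h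
  exact ⟨m, z + c, by simpa only [add_assoc] using h⟩

def Twisted (_x _y : M) : Type _ := M

variable [IsOrderedAddMonoid M]

instance : AddCommMonoid (Twisted x y) := inferInstanceAs (AddCommMonoid M)

instance : Preorder (Twisted x y) where
  le := (TwistedLE x y : M → M → Prop)
  le_refl a := twistedLE_of_le (le_refl (α := M) a)
  le_trans _ _ _ := TwistedLE.trans

instance : IsOrderedCancelAddMonoid (Twisted x y) where
  add_le_add_left a b h c := TwistedLE.add_right (M := M) (a := a) (b := b) h c
  le_of_add_le_add_left a b c := TwistedLE.of_add_left (M := M) (c := a) (a := b) (b := c)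

end Twisted

section States

variable {M : Type*} [AddCommMonoid M] [PartialOrder M] {u : M} {s : M → ℝ}

lemma IsState.map_nsmul (hs : IsState u s) (n : ℕ) (a : M) : s (n • a) = n * s a := by
  induction n with
  | zero => simpa using hs.1
  | succ n ih => rw [succ_nsmul, hs.2.1, ih]; push_cast; ring

lemma IsState.lt_of_nsmul_add_le (hs : IsState u s) {n : ℕ} {x y z : M}
    (h : n • x + z + u ≤ n • y + z) : s x < s y := by
  have := hs.2.2.1 _ _ h
  rw [hs.2.1, hs.2.1, hs.2.1, hs.map_nsmul, hs.map_nsmul, hs.2.2.2] at this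
  exact lt_of_mul_lt_mul_left (by linarith) (Nat.cast_nonneg n)

end States

section OrderedMonoid

variable {M : Type*} [AddCommMonoid M] [PartialOrder M] [IsOrderedAddMonoid M]
  {u : M}

lemma add_add_le_of_add_le_self (hpos : ∀ a : M, 0 ≤ a) (hunit : ∀ a, ∃ n : ℕ, a ≤ n • u)
    {z : M} (h : z + u ≤ z) (a b : M) : a + z + u ≤ b + z := by
  have hz : ∀ n : ℕ, z + n • u ≤ z := by
    intro n
    induction n with
    | zero => simp
    | succ n ih =>
      calc z + (n + 1) • u = z + n • u + u := by rw [succ_nsmul, add_assoc]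
        _ ≤ z + u := add_le_add_left ih u
        _ ≤ z := h
  obtain ⟨n, hn⟩ := hunit a
  calc a + z + u ≤ n • u + z + u := by gcongr
    _ = z + (n + 1) • u := by rw [succ_nsmul]; abel
    _ ≤ z := hz _
    _ ≤ b + z := le_add_of_nonneg_left (hpos b)

lemma TwistedLE.exists_pos_nsmul_add_le (hpos : ∀ a : M, 0 ≤ a)
    (hunit : ∀ a, ∃ n : ℕ, a ≤ n • u) {x y : M} (h : TwistedLE x y u 0) :
    ∃ n : ℕ, 0 < n ∧ ∃ z : M, n • x + z + u ≤ n • y + z := by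
  obtain ⟨m, z, hm⟩ := h
  rw [add_zero] at hm
  rcases m.eq_zero_or_pos with rfl | hm₀
  · simp only [zero_smul, zero_add] at hm
    exact ⟨1, one_pos, z, by simpa using add_add_le_of_add_le_self hpos hunit hm x y⟩
  · exact ⟨m, hm₀, z, hm⟩

lemma exists_state_le (hpos : ∀ a : M, 0 ≤ a) (hunit : ∀ a, ∃ n : ℕ, a ≤ n • u) {x y : M}
    (h : ¬ ∃ n : ℕ, 0 < n ∧ ∃ z : M, n • x + z + u ≤ n • y + z) :
    ∃ s ∈ StateSpace M u, s y ≤ s x := by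
  obtain ⟨s, hs, hsu⟩ := exists_monotone_addMonoidHom_real (N := Twisted x y) (u := u)
    (fun a => twistedLE_of_le (hpos a)) (fun a => (hunit a).imp fun _ => twistedLE_of_le)
    ⟨twistedLE_of_le (hpos u), fun hu => h (hu.exists_pos_nsmul_add_le hpos hunit)⟩
  exact ⟨s, ⟨map_zero s, map_add s, fun a b hab => hs (twistedLE_of_le hab), hsu⟩,
    hs twistedLE_swap⟩

end OrderedMonoid

/-- Let `(M, ≤, u)` be a scaled partially ordered abelian semigroup and `x y : M`.
Then `s x < s y` for every state `s ∈ S(M, ≤, u)` iff there exist a positive integer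
`n` and `z : M` with `n • x + z + u ≤ n • y + z`. -/
theorem state_lt_iff_exists {M : Type*} [AddCommMonoid M] [PartialOrder M]
    (hpos : ∀ a : M, 0 ≤ a)
    (hadd : ∀ a b c : M, a ≤ b → a + c ≤ b + c)
    (u : M) (hu : ∀ x : M, ∃ n : ℕ, x ≤ n • u)
    (x y : M) :
    (∀ s ∈ StateSpace M u, s x < s y) ↔
      ∃ n : ℕ, 0 < n ∧ ∃ z : M, n • x + z + u ≤ n • y + z := by
  have : IsOrderedAddMonoid M := { add_le_add_left := fun a b h c => hadd a b c h }
  constructor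
  · intro hlt
    by_contra h
    obtain ⟨s, hs, hyx⟩ := exists_state_le hpos hu h
    exact (hlt s hs).not_ge hyx
  · rintro ⟨n, -, z, h⟩ s hs
    exact hs.lt_of_nsmul_add_le h
end

section
/- Let (M, ≤) be an almost unperforated partially ordered abelian semigroup, let u ∈ M be an order unit, and let x ∈ M. If s(x) < s(u) for every state s ∈ S(M, ≤, u), then x ≤ u. -/
/-! If `x ≰ u`, almost unperforation upgrades this to: `q • x` is not stably below `p • u`
whenever `p < q`, where `a` is stably below `b` if `a + c ≤ b + c` for some `c`. Then `n • u ↦ n`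
is a partial state that extends to `x` with a value `t ≥ 1`. Partial states, recorded as graphs
that are monotone for the stable preorder, extend to one more element by squeezing the new value
between the bounds the graph forces on it, as in the Hahn–Banach theorem; Zorn's lemma then
yields a state `s` with `s x = t ≥ 1 = s u`. -/

section

variable {M : Type*} [AddCommMonoid M] [PartialOrder M]

/-- States cannot distinguish this preorder from `≤`, and unlike `≤` it is cancellative. -/
def StablyLE (a b : M) : Prop := ∃ c : M, a + c ≤ b + c

namespace StablyLE

theorem refl (a : M) : StablyLE a a := ⟨0, le_rfl⟩

theorem of_le {a b : M} (h : a ≤ b) : StablyLE a b := ⟨0, by simpa using h⟩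

theorem of_add_right {a b c : M} (h : StablyLE (a + c) (b + c)) : StablyLE a b := by
  obtain ⟨e, he⟩ := h
  exact ⟨c + e, by simpa only [add_assoc] using he⟩

variable [IsOrderedAddMonoid M]

theorem add {a b c d : M} (hab : StablyLE a b) (hcd : StablyLE c d) :
    StablyLE (a + c) (b + d) := by
  obtain ⟨e, he⟩ := hab
  obtain ⟨f, hf⟩ := hcd
  refine ⟨e + f, ?_⟩
  calc a + c + (e + f) = (a + e) + (c + f) := by abel
    _ ≤ (b + e) + (d + f) := add_le_add he hf
    _ = b + d + (e + f) := by abel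

theorem trans {a b c : M} (hab : StablyLE a b) (hbc : StablyLE b c) : StablyLE a c := by
  obtain ⟨e, he⟩ := hab
  obtain ⟨f, hf⟩ := hbc
  refine ⟨e + f, ?_⟩
  calc a + (e + f) = (a + e) + f := by abel
    _ ≤ (b + e) + f := by gcongr
    _ = (b + f) + e := by abel
    _ ≤ (c + f) + e := by gcongr
    _ = c + (e + f) := by abel

theorem nsmul {a b : M} (h : StablyLE a b) (n : ℕ) : StablyLE (n • a) (n • b) := by
  induction n with
  | zero => simpa using refl (0 : M)
  | succ n ih => simpa only [succ_nsmul] using ih.add h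

theorem add_nsmul_of_add {a b : M} (h : StablyLE (a + b) a) (n : ℕ) :
    StablyLE (a + n • b) a := by
  induction n with
  | zero => simpa using refl a
  | succ n ih =>
    rw [succ_nsmul, ← add_assoc]
    exact (ih.add (refl b)).trans h

end StablyLE

/-- A partial state, encoded by its graph. -/
def IsMonotoneGraph (G : AddSubmonoid (M × ℝ)) : Prop :=
  ∀ p ∈ G, ∀ q ∈ G, StablyLE p.1 q.1 → p.2 ≤ q.2

def IsAdmissibleValue (G : AddSubmonoid (M × ℝ)) (z : M) (t : ℝ) : Prop :=
  (∀ p ∈ G, ∀ q ∈ G, ∀ k : ℕ, StablyLE (p.1 + k • z) q.1 → p.2 + k * t ≤ q.2) ∧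
    (∀ p ∈ G, ∀ q ∈ G, ∀ k : ℕ, StablyLE p.1 (q.1 + k • z) → p.2 ≤ q.2 + k * t)

namespace IsMonotoneGraph

variable {G : AddSubmonoid (M × ℝ)}

theorem eq_of_mem (hG : IsMonotoneGraph G) {a : M} {r r' : ℝ} (hr : (a, r) ∈ G)
    (hr' : (a, r') ∈ G) : r = r' :=
  le_antisymm (hG _ hr _ hr' (.refl a)) (hG _ hr' _ hr (.refl a))

theorem sSup_of_isChain {c : Set (AddSubmonoid (M × ℝ))} (hc : IsChain (· ≤ ·) c)
    (hne : c.Nonempty) (h : ∀ G ∈ c, IsMonotoneGraph G) : IsMonotoneGraph (sSup c) := by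
  intro p hp q hq
  rw [AddSubmonoid.mem_sSup_of_directedOn hne hc.directedOn] at hp hq
  obtain ⟨G, hGc, hpG⟩ := hp
  obtain ⟨H, hHc, hqH⟩ := hq
  obtain ⟨K, hKc, hGK, hHK⟩ := hc.directedOn G hGc H hHc
  exact h K hKc p (hGK hpG) q (hHK hqH)

end IsMonotoneGraph

theorem IsAdmissibleValue.isMonotoneGraph_sup {G : AddSubmonoid (M × ℝ)} {z : M} {t : ℝ}
    (ht : IsAdmissibleValue G z t) : IsMonotoneGraph (G ⊔ AddSubmonoid.closure {(z, t)}) := by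
  intro _ hp' _ hq' hpq
  obtain ⟨p, hp, _, hn, rfl⟩ := AddSubmonoid.mem_sup.1 hp'
  obtain ⟨q, hq, _, hm, rfl⟩ := AddSubmonoid.mem_sup.1 hq'
  obtain ⟨n, rfl⟩ := AddSubmonoid.mem_closure_singleton.1 hn
  obtain ⟨m, rfl⟩ := AddSubmonoid.mem_closure_singleton.1 hm
  simp only [Prod.fst_add, Prod.snd_add, Prod.smul_mk, nsmul_eq_mul] at hpq ⊢
  rcases le_total n m with hnm | hmn
  · obtain ⟨k, rfl⟩ := Nat.exists_eq_add_of_le hnm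
    have h : StablyLE p.1 (q.1 + k • z) :=
      .of_add_right (c := n • z) (by rwa [add_nsmul, add_comm (n • z), ← add_assoc] at hpq)
    have := ht.2 p hp q hq k h
    push_cast
    linarith
  · obtain ⟨k, rfl⟩ := Nat.exists_eq_add_of_le hmn
    have h : StablyLE (p.1 + k • z) q.1 :=
      .of_add_right (c := m • z) (by rwa [add_nsmul, add_comm (m • z), ← add_assoc] at hpq)
    have := ht.1 p hp q hq k h
    push_cast
    linarith

variable [IsOrderedAddMonoid M]

theorem nsmul_add_le_nsmul_add {a b c : M} (h : a + c ≤ b + c) (n : ℕ) :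
    n • a + c ≤ n • b + c := by
  induction n with
  | zero => simp
  | succ n ih =>
    calc (n + 1) • a + c = a + (n • a + c) := by rw [succ_nsmul]; abel
      _ ≤ a + (n • b + c) := by gcongr
      _ = n • b + (a + c) := by abel
      _ ≤ n • b + (b + c) := by gcongr
      _ = (n + 1) • b + c := by rw [succ_nsmul]; abel

/-- The catalyst `c` of `Q • y + c ≤ P • u + c` is absorbed by repeating the inequality
`m + 1` times, where `c ≤ m • u`. -/
theorem le_of_stablyLE_nsmul (hpos : ∀ a : M, 0 ≤ a)
    (haup : ∀ x y : M, ∀ k k' : ℕ, k' < k → k • x ≤ k' • y → x ≤ y)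
    {u : M} (hu : ∀ x : M, ∃ n : ℕ, x ≤ n • u) {y : M} {P Q : ℕ} (hPQ : P < Q)
    (h : StablyLE (Q • y) (P • u)) : y ≤ u := by
  obtain ⟨c, hc⟩ := h
  obtain ⟨m, hm⟩ := hu c
  refine haup y u ((m + 1) * Q) ((m + 1) * P + m) (by nlinarith) ?_
  calc ((m + 1) * Q) • y = (m + 1) • (Q • y) := mul_nsmul' y (m + 1) Q
    _ ≤ (m + 1) • (Q • y) + c := le_add_of_nonneg_right (hpos c)
    _ ≤ (m + 1) • (P • u) + c := nsmul_add_le_nsmul_add hc (m + 1)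
    _ ≤ (m + 1) • (P • u) + m • u := by gcongr
    _ = ((m + 1) * P + m) • u := by rw [add_nsmul u ((m + 1) * P) m, mul_nsmul']

namespace IsMonotoneGraph

variable {G : AddSubmonoid (M × ℝ)}

/-- Adding `k` copies of `h'` to `k'` copies of `h` eliminates `z`. -/
theorem mul_sub_le_mul_sub (hG : IsMonotoneGraph G) {z : M} {p q p' q' : M × ℝ}
    (hp : p ∈ G) (hq : q ∈ G) (hp' : p' ∈ G) (hq' : q' ∈ G) {k k' : ℕ}
    (h : StablyLE (p.1 + k • z) q.1) (h' : StablyLE p'.1 (q'.1 + k' • z)) :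
    k * (p'.2 - q'.2) ≤ k' * (q.2 - p.2) := by
  have hz : StablyLE (k • p'.1 + k' • p.1) (k • q'.1 + k' • q.1) := by
    refine ((h'.nsmul k).add (.refl _)).trans ?_
    have e : k • (q'.1 + k' • z) + k' • p.1 = k • q'.1 + k' • (p.1 + k • z) := by
      rw [nsmul_add, nsmul_add, smul_smul, smul_smul, mul_comm]; abel
    exact e ▸ (StablyLE.refl _).add (h.nsmul k')
  have := hG _ (G.add_mem (G.nsmul_mem hp' k) (G.nsmul_mem hp k'))
    _ (G.add_mem (G.nsmul_mem hq' k) (G.nsmul_mem hq k')) (by simpa using hz)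
  simp only [Prod.snd_add, Prod.smul_snd, nsmul_eq_mul] at this
  linarith

theorem exists_isAdmissibleValue_ge (hG : IsMonotoneGraph G) {u : M}
    (hu : ∀ x : M, ∃ n : ℕ, x ≤ n • u) (hu1 : (u, 1) ∈ G) (z : M) (c : ℝ)
    (hc : ∀ p ∈ G, ∀ q ∈ G, ∀ k : ℕ, 0 < k → StablyLE (p.1 + k • z) q.1 →
      p.2 + k * c ≤ q.2) :
    ∃ t, c ≤ t ∧ IsAdmissibleValue G z t := by
  set U : Set ℝ := {v | ∃ p ∈ G, ∃ q ∈ G, ∃ k : ℕ, 0 < k ∧ StablyLE (p.1 + k • z) q.1 ∧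
    v = (q.2 - p.2) / k}
  have hU : U.Nonempty := by
    obtain ⟨n, hn⟩ := hu z
    exact ⟨_, 0, G.zero_mem, n • (u, 1), G.nsmul_mem hu1 n, 1, one_pos,
      .of_le (by simpa using hn), rfl⟩
  have hcU : ∀ v ∈ U, c ≤ v := by
    rintro _ ⟨p, hp, q, hq, k, hk, h, rfl⟩
    rw [le_div_iff₀ (by positivity)]
    linarith [hc p hp q hq k hk h]
  refine ⟨sInf U, le_csInf hU hcU, ?_, ?_⟩
  · intro p hp q hq k h
    rcases Nat.eq_zero_or_pos k with rfl | hk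
    · simpa using hG p hp q hq (by simpa using h)
    · have := csInf_le ⟨c, hcU⟩ ⟨p, hp, q, hq, k, hk, h, rfl⟩
      rw [le_div_iff₀ (by positivity)] at this
      linarith
  · intro p' hp' q' hq' k' h'
    rcases Nat.eq_zero_or_pos k' with rfl | hk'
    · simpa using hG p' hp' q' hq' (by simpa using h')
    · have : (p'.2 - q'.2) / k' ≤ sInf U := by
        refine le_csInf hU ?_
        rintro _ ⟨p, hp, q, hq, k, hk, h, rfl⟩
        rw [div_le_div_iff₀ (by positivity) (by positivity)]
        linarith [hG.mul_sub_le_mul_sub hp hq hp' hq' h h']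
      rw [div_le_iff₀ (by positivity)] at this
      linarith

/-- A maximal partial state is defined everywhere, since by positivity `0` bounds the values
forced on a new element from below. -/
theorem exists_mem_of_maximal (hpos : ∀ a : M, 0 ≤ a) {u : M}
    (hu : ∀ x : M, ∃ n : ℕ, x ≤ n • u) (hu1 : (u, 1) ∈ G)
    (hmax : Maximal IsMonotoneGraph G) (z : M) : ∃ t, (z, t) ∈ G := by
  obtain ⟨t, -, ht⟩ := hmax.1.exists_isAdmissibleValue_ge hu hu1 z 0 fun p hp q hq k _ h => by
    simpa using hmax.1 p hp q hq ((StablyLE.of_le (le_add_of_nonneg_right (hpos _))).trans h)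
  exact ⟨t, hmax.2 ht.isMonotoneGraph_sup le_sup_left
    (AddSubmonoid.mem_sup_right (AddSubmonoid.subset_closure rfl))⟩

theorem exists_state (hpos : ∀ a : M, 0 ≤ a) {u : M} (hu : ∀ x : M, ∃ n : ℕ, x ≤ n • u)
    (hG : IsMonotoneGraph G) (hu1 : (u, 1) ∈ G) :
    ∃ s ∈ StateSpace M u, ∀ p ∈ G, s p.1 = p.2 := by
  obtain ⟨H, hGH, hmax⟩ := zorn_le_nonempty₀ {H | IsMonotoneGraph H}
    (fun c hc hchain y hy => ⟨sSup c, sSup_of_isChain hchain ⟨y, hy⟩ hc,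
      fun _ => le_sSup⟩) G hG
  choose s hs using exists_mem_of_maximal hpos hu (hGH hu1) hmax
  have hsH : ∀ p ∈ H, s p.1 = p.2 := fun p hp => hmax.1.eq_of_mem (hs p.1) hp
  refine ⟨s, ⟨hsH 0 H.zero_mem, fun a b => hsH _ (H.add_mem (hs a) (hs b)),
    fun a b hab => hmax.1 _ (hs a) _ (hs b) (.of_le hab), hsH _ (hGH hu1)⟩,
    fun p hp => hsH p (hGH hp)⟩

end IsMonotoneGraph

/-- If `(m + 1) • u` were stably below `m • u`, then so would be every multiple of `u`,
hence `(m + 1) • x`. -/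
theorem le_of_stablyLE_nsmul_nsmul (hpos : ∀ a : M, 0 ≤ a) {u x : M}
    (hx : ∀ p q : ℕ, p < q → ¬ StablyLE (q • x) (p • u)) (hu : ∀ y : M, ∃ n : ℕ, y ≤ n • u)
    {n m : ℕ} (h : StablyLE (n • u) (m • u)) : n ≤ m := by
  by_contra! hmn
  have hsucc : StablyLE (m • u + u) (m • u) :=
    .trans (.of_le (by simpa [succ_nsmul] using nsmul_le_nsmul_left (hpos u) hmn)) h
  obtain ⟨K, hK⟩ := hu x
  refine hx m (m + 1) m.lt_add_one (.trans (.of_le ?_) (hsucc.add_nsmul_of_add ((m + 1) * K)))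
  calc (m + 1) • x ≤ (m + 1) • (K • u) := nsmul_le_nsmul_right hK _
    _ = ((m + 1) * K) • u := (mul_nsmul' u (m + 1) K).symm
    _ ≤ m • u + ((m + 1) * K) • u := le_add_of_nonneg_left (hpos _)

theorem isMonotoneGraph_closure_unit (hpos : ∀ a : M, 0 ≤ a) {u x : M}
    (hx : ∀ p q : ℕ, p < q → ¬ StablyLE (q • x) (p • u)) (hu : ∀ y : M, ∃ n : ℕ, y ≤ n • u) :
    IsMonotoneGraph (AddSubmonoid.closure {((u, 1) : M × ℝ)}) := by
  rintro _ hp _ hq h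
  obtain ⟨n, rfl⟩ := AddSubmonoid.mem_closure_singleton.1 hp
  obtain ⟨m, rfl⟩ := AddSubmonoid.mem_closure_singleton.1 hq
  simpa using le_of_stablyLE_nsmul_nsmul hpos hx hu (by simpa using h)

theorem add_le_of_stablyLE_nsmul_add_nsmul (hpos : ∀ a : M, 0 ≤ a) {u x : M}
    (hx : ∀ p q : ℕ, p < q → ¬ StablyLE (q • x) (p • u)) {n m k : ℕ} (hk : 0 < k)
    (h : StablyLE (n • u + k • x) (m • u)) : n + k ≤ m := by
  by_contra! hm
  obtain ⟨j, rfl⟩ := Nat.exists_eq_succ_of_ne_zero hk.ne'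
  have h' : StablyLE (n • u + (j + 1) • x) (n • u + j • u) :=
    h.trans (.of_le (show m • u ≤ n • u + j • u by
      rw [← add_nsmul]; exact nsmul_le_nsmul_left (hpos u) (by omega)))
  exact hx j (j + 1) j.lt_add_one (.of_add_right (c := n • u) (by simpa [add_comm] using h'))

end

/-- Let `(M, ≤)` be an almost unperforated partially ordered abelian semigroup,
`u` an order unit and `x ∈ M`. If `s x < s u` for every state `s ∈ S(M, ≤, u)`,
then `x ≤ u`. -/
theorem le_of_state_lt_of_almostUnperforated {M : Type*} [AddCommMonoid M] [PartialOrder M]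
    (hpos : ∀ a : M, 0 ≤ a)
    (hadd : ∀ a b c : M, a ≤ b → a + c ≤ b + c)
    (haup : ∀ x y : M, ∀ k k' : ℕ, k' < k → k • x ≤ k' • y → x ≤ y)
    (u : M) (hu : ∀ x : M, ∃ n : ℕ, x ≤ n • u)
    (x : M) (hx : ∀ s ∈ StateSpace M u, s x < s u) :
    x ≤ u := by
  have : IsOrderedAddMonoid M := { add_le_add_left := fun a b h c => hadd a b c h }
  by_contra hxu
  have hx' : ∀ p q : ℕ, p < q → ¬ StablyLE (q • x) (p • u) := fun p q hpq h =>
    hxu (le_of_stablyLE_nsmul hpos haup hu hpq h)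
  obtain ⟨t, ht, hadm⟩ := (isMonotoneGraph_closure_unit hpos hx' hu).exists_isAdmissibleValue_ge
    hu (AddSubmonoid.subset_closure rfl) x 1 <| by
      rintro _ hp _ hq k hk h
      obtain ⟨n, rfl⟩ := AddSubmonoid.mem_closure_singleton.1 hp
      obtain ⟨m, rfl⟩ := AddSubmonoid.mem_closure_singleton.1 hq
      simp only [Prod.smul_mk, nsmul_eq_mul, mul_one] at h ⊢
      exact_mod_cast add_le_of_stablyLE_nsmul_add_nsmul hpos hx' hk h
  obtain ⟨s, hs, hsG⟩ := hadm.isMonotoneGraph_sup.exists_state hpos hu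
    (AddSubmonoid.mem_sup_left (AddSubmonoid.subset_closure rfl))
  have hsx : s x = t := hsG _ (AddSubmonoid.mem_sup_right (AddSubmonoid.subset_closure rfl))
  linarith [hx s hs, hs.2.2.2]
end
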